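/- arXiv:2601.00979 — 4 statements merged into one kernel-verified Lean document; each statement's English description precedes it below -/
import Mathlib

section
/- The constant C satisfies C = 1/2 − (1/(2·ζ(3)))·Σ_{x > y ≥ 1} 1/(y·(x+y)²), where the sum ranges over all pairs of positive integers x > y and ζ(3) = Σ_{m ≥ 1} 1/m³. -/
/-- The constant `C = Σ_{x > y ≥ 1, gcd(x,y)=1} (2x+y) / (2x²(x+y)²)`. -/
noncomputable def constC : ℝ :=
  ∑' p : ℕ × ℕ,
    if p.2 < p.1 ∧ 1 ≤ p.2 ∧ Nat.gcd p.1 p.2 = 1 then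
      (2 * (p.1 : ℝ) + p.2) / (2 * (p.1 : ℝ) ^ 2 * ((p.1 : ℝ) + p.2) ^ 2)
    else 0

/-- `ζ(3) = Σ_{m ≥ 1} 1/m³`. -/
noncomputable def zetaThree : ℝ := ∑' m : ℕ, if 1 ≤ m then 1 / (m : ℝ) ^ 3 else 0

/-!
Let `G = Σ_{x > y ≥ 1} w(x, y)` with `w(x, y) = (2x + y) / (2x²(x + y)²)`, summed over all pairs.
Grouping the pairs by their gcd `d`, and since `w` is homogeneous of degree `-3`, `G = ζ(3) C`.
The partial fraction identity `2 w(x, y) + 1/(y(x + y)²) = 1/(y x²)` gives `2G + B = ζ(2,1)`,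
where `B = Σ_{x > y ≥ 1} 1/(y(x + y)²)` and `ζ(2,1) = Σ_{x > y ≥ 1} 1/(y x²)`.
Euler's `ζ(2,1) = ζ(3)` follows by evaluating `Σ_{m,n ≥ 1} 1/(mn(m + n))` in two ways:
`1/(mn(m + n)) = 1/(m(m + n)²) + 1/(n(m + n)²)` shows it is `2 ζ(2,1)`, while summing over `n` first
telescopes to `Σ_m H_m / m² = ζ(2,1) + ζ(3)`.
All rearrangements are done in `ℝ≥0∞`; finiteness of `ζ(2,1)` comes from `1/(y x²) ≤ (xy)^(-3/2)`.
-/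

open Filter Topology ENNReal

noncomputable section

-- No summability hypothesis: if `f` is not summable, both sides are `0`.
lemma tsum_eq_toReal_tsum_ofReal {ι : Type*} {f : ι → ℝ} (hf : ∀ i, 0 ≤ f i) :
    ∑' i, f i = (∑' i, ENNReal.ofReal (f i)).toReal := by
  rw [ENNReal.tsum_toReal_eq fun _ => ENNReal.ofReal_ne_top]
  exact tsum_congr fun i => (ENNReal.toReal_ofReal (hf i)).symm

lemma tsum_ofReal_eq_of_hasSum {ι : Type*} {f : ι → ℝ} {a : ℝ} (h : HasSum f a)
    (hf : ∀ i, 0 ≤ f i) : ∑' i, ENNReal.ofReal (f i) = ENNReal.ofReal a := by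
  rw [← ENNReal.ofReal_tsum_of_nonneg hf h.summable, h.tsum_eq]

lemma hasSum_sub_add_of_antitone {f : ℕ → ℝ} (hf : Antitone f)
    (h0 : Tendsto f atTop (𝓝 0)) (m : ℕ) :
    HasSum (fun n => f n - f (n + m)) (∑ k ∈ Finset.range m, f k) := by
  rw [hasSum_iff_tendsto_nat_of_nonneg fun n => sub_nonneg.2 (hf (Nat.le_add_right n m))]
  have hpartial : ∀ N, ∑ n ∈ Finset.range N, (f n - f (n + m)) =
      ∑ k ∈ Finset.range m, f k - ∑ k ∈ Finset.range m, f (N + k) := by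
    intro N
    have hN := Finset.sum_range_add f N m
    have hm := Finset.sum_range_add f m N
    simp only [Finset.sum_sub_distrib, add_comm _ m] at hN hm ⊢
    linarith
  have htail : Tendsto (fun N => ∑ k ∈ Finset.range m, f (N + k)) atTop (𝓝 0) := by
    simpa using tendsto_finsetSum (Finset.range m) fun k _ => h0.comp (tendsto_add_atTop_nat k)
  simpa [hpartial] using tendsto_const_nhds.sub htail

-- Every nonzero pair is uniquely `d • q` with `d > 0` and `q` coprime.
lemma tsum_mul_coprime_eq_tsum {α : Type*} [AddCommMonoid α] [TopologicalSpace α]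
    (f : ℕ × ℕ → α) (hf : f (0, 0) = 0) :
    ∑' r : ℕ × (ℕ × ℕ),
      (if 0 < r.1 ∧ Nat.Coprime r.2.1 r.2.2 then f (r.1 * r.2.1, r.1 * r.2.2) else 0) =
      ∑' p, f p := by
  let S : Set (ℕ × (ℕ × ℕ)) := {r | 0 < r.1 ∧ Nat.Coprime r.2.1 r.2.2}
  have hinj : Function.Injective fun r : S => (r.1.1 * r.1.2.1, r.1.1 * r.1.2.2) := by
    rintro ⟨⟨d, x, y⟩, hd, hxy⟩ ⟨⟨d', x', y'⟩, hd', hxy'⟩ h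
    simp only [Prod.mk.injEq] at h
    have hdd : d = d' := by
      simpa [Nat.gcd_mul_left, hxy.gcd_eq_one, hxy'.gcd_eq_one] using congrArg₂ Nat.gcd h.1 h.2
    subst hdd
    simp [Nat.eq_of_mul_eq_mul_left hd h.1, Nat.eq_of_mul_eq_mul_left hd h.2]
  have hrange : Function.support f ⊆ Set.range fun r : S => (r.1.1 * r.1.2.1, r.1.1 * r.1.2.2) := by
    rintro ⟨a, b⟩ hab
    have hg : 0 < Nat.gcd a b := Nat.pos_of_ne_zero fun h => by
      simp_all [Nat.gcd_eq_zero_iff.1 h]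
    obtain ⟨x, y, hxy, ha, hb⟩ := Nat.exists_coprime a b
    exact ⟨⟨(Nat.gcd a b, x, y), hg, hxy⟩, by simp [mul_comm, ← ha, ← hb]⟩
  rw [← hinj.tsum_eq hrange, tsum_subtype S (fun r => f (r.1 * r.2.1, r.1 * r.2.2))]
  exact tsum_congr fun r => by simp [S, Set.indicator_apply]

lemma tsum_comp_add_fst_eq_tsum {α : Type*} [AddCommMonoid α] [TopologicalSpace α]
    (f : ℕ × ℕ → α) (hf : ∀ x y, x < y → f (x, y) = 0) :
    ∑' q : ℕ × ℕ, f (q.1 + q.2, q.1) = ∑' p, f p := by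
  refine Function.Injective.tsum_eq (g := fun q : ℕ × ℕ => (q.1 + q.2, q.1)) ?_ ?_
  · rintro ⟨m, n⟩ ⟨m', n'⟩ h
    simp only [Prod.mk.injEq] at h
    ext <;> omega
  · rintro ⟨x, y⟩ hxy
    have hyx : y ≤ x := not_lt.1 fun h => hxy (hf x y h)
    exact ⟨(y, x - y), by simp [Nat.add_sub_cancel' hyx]⟩

lemma one_div_mul_mul_add_eq {m n : ℝ} (hm : 0 < m) (hn : 0 < n) :
    1 / (m * n * (m + n)) = 1 / (m * (m + n) ^ 2) + 1 / (n * (m + n) ^ 2) := by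
  field_simp
  ring

lemma one_div_mul_sq_le_rpow {x y : ℝ} (hy : 0 < y) (hyx : y ≤ x) :
    1 / (y * x ^ 2) ≤ (x ^ (3 / 2 : ℝ))⁻¹ * (y ^ (3 / 2 : ℝ))⁻¹ := by
  have hx : 0 < x := hy.trans_le hyx
  have hpow : ∀ t : ℝ, 0 < t → t ^ (3 / 2 : ℝ) = t * √t := fun t ht => by
    rw [Real.sqrt_eq_rpow, ← Real.rpow_one_add' ht.le (by norm_num)]
    norm_num
  rw [← mul_inv, one_div, hpow x hx, hpow y hy]
  refine inv_anti₀ (by positivity) ?_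
  have hsq : √y ≤ √x := Real.sqrt_le_sqrt hyx
  have hx2 : √x * √x = x := Real.mul_self_sqrt hx.le
  have : √x * √y ≤ x := by nlinarith [Real.sqrt_nonneg x]
  nlinarith [mul_pos hx hy]

def constCWeight (x y : ℝ) : ℝ := (2 * x + y) / (2 * x ^ 2 * (x + y) ^ 2)

lemma constCWeight_mul {d : ℝ} (hd : d ≠ 0) (x y : ℝ) :
    constCWeight (d * x) (d * y) = 1 / d ^ 3 * constCWeight x y := by
  unfold constCWeight
  rw [show (2 * (d * x) + d * y) / (2 * (d * x) ^ 2 * (d * x + d * y) ^ 2) =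
    d * (2 * x + y) / (d * (d ^ 3 * (2 * x ^ 2 * (x + y) ^ 2))) by ring, mul_div_mul_left _ _ hd,
    div_mul_div_comm, one_mul]

lemma two_mul_constCWeight_add {x y : ℝ} (hx : 0 < x) (hy : 0 < y) :
    2 * constCWeight x y + 1 / (y * (x + y) ^ 2) = 1 / (y * x ^ 2) := by
  unfold constCWeight
  field_simp
  ring

def coprimeWeightTerm (p : ℕ × ℕ) : ℝ :=
  if p.2 < p.1 ∧ 1 ≤ p.2 ∧ Nat.gcd p.1 p.2 = 1 then constCWeight p.1 p.2 else 0

def weightTerm (p : ℕ × ℕ) : ℝ :=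
  if p.2 < p.1 ∧ 1 ≤ p.2 then constCWeight p.1 p.2 else 0

def zetaTwoOneTerm (p : ℕ × ℕ) : ℝ :=
  if p.2 < p.1 ∧ 1 ≤ p.2 then 1 / ((p.2 : ℝ) * (p.1 : ℝ) ^ 2) else 0

def invMulAddSqTerm (p : ℕ × ℕ) : ℝ :=
  if p.2 < p.1 ∧ 1 ≤ p.2 then 1 / ((p.2 : ℝ) * ((p.1 : ℝ) + p.2) ^ 2) else 0

def tornheimTerm (p : ℕ × ℕ) : ℝ :=
  if 1 ≤ p.1 ∧ 1 ≤ p.2 then 1 / ((p.1 : ℝ) * p.2 * (p.1 + p.2)) else 0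

lemma coprimeWeightTerm_nonneg (p : ℕ × ℕ) : 0 ≤ coprimeWeightTerm p := by
  unfold coprimeWeightTerm constCWeight; split <;> positivity

lemma weightTerm_nonneg (p : ℕ × ℕ) : 0 ≤ weightTerm p := by
  unfold weightTerm constCWeight; split <;> positivity

lemma zetaTwoOneTerm_nonneg (p : ℕ × ℕ) : 0 ≤ zetaTwoOneTerm p := by
  unfold zetaTwoOneTerm; split <;> positivity

lemma invMulAddSqTerm_nonneg (p : ℕ × ℕ) : 0 ≤ invMulAddSqTerm p := by
  unfold invMulAddSqTerm; split <;> positivity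

lemma tornheimTerm_nonneg (p : ℕ × ℕ) : 0 ≤ tornheimTerm p := by
  unfold tornheimTerm; split <;> positivity

lemma zetaThree_eq_tsum : zetaThree = ∑' m : ℕ, 1 / (m : ℝ) ^ 3 :=
  tsum_congr fun m => by rcases m with _ | m <;> simp

lemma zetaThree_pos : 0 < zetaThree := by
  rw [zetaThree_eq_tsum]
  exact (Real.summable_one_div_nat_pow.2 (by norm_num)).tsum_pos (fun _ => by positivity) 1
    (by norm_num)

lemma weightTerm_mul {d x y : ℕ} (hd : 0 < d) (hxy : Nat.Coprime x y) :
    weightTerm (d * x, d * y) = 1 / (d : ℝ) ^ 3 * coprimeWeightTerm (x, y) := by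
  have hcond : (d * y < d * x ∧ 1 ≤ d * y) ↔ (y < x ∧ 1 ≤ y) := by
    rw [Nat.mul_lt_mul_left hd, Nat.one_le_iff_ne_zero, Nat.one_le_iff_ne_zero, mul_ne_zero_iff]
    omega
  simp only [weightTerm, coprimeWeightTerm, hcond, hxy.gcd_eq_one, and_true]
  split
  · push_cast
    exact constCWeight_mul (by positivity) _ _
  · simp

lemma two_mul_weightTerm_add (p : ℕ × ℕ) :
    2 * weightTerm p + invMulAddSqTerm p = zetaTwoOneTerm p := by
  simp only [weightTerm, invMulAddSqTerm, zetaTwoOneTerm]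
  split
  · next h =>
    have hx : (0 : ℝ) < p.1 := by exact_mod_cast (by omega : 0 < p.1)
    exact two_mul_constCWeight_add hx (by exact_mod_cast h.2)
  · simp

lemma tornheimTerm_eq (m n : ℕ) :
    tornheimTerm (m, n) = zetaTwoOneTerm (m + n, m) + zetaTwoOneTerm (m + n, n) := by
  simp only [tornheimTerm, zetaTwoOneTerm]
  by_cases h : 1 ≤ m ∧ 1 ≤ n
  · rw [if_pos h, if_pos ⟨by omega, h.1⟩, if_pos ⟨by omega, h.2⟩]
    push_cast
    exact one_div_mul_mul_add_eq (by exact_mod_cast h.1) (by exact_mod_cast h.2)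
  · rw [if_neg h, if_neg (by omega), if_neg (by omega), add_zero]

lemma hasSum_tornheimTerm_row (m : ℕ) :
    HasSum (fun n => tornheimTerm (m, n))
      (∑ y ∈ Finset.range m, zetaTwoOneTerm (m, y) + 1 / (m : ℝ) ^ 3) := by
  obtain _ | m := m
  · simp [tornheimTerm, hasSum_zero]
  set f : ℕ → ℝ := fun k => 1 / ((k : ℝ) + 1)
  have hf : Antitone f := fun a b hab => by simp only [f]; gcongr
  have htel := (hasSum_sub_add_of_antitone hf tendsto_one_div_add_atTop_nhds_zero_nat
    (m + 1)).mul_left (1 / ((m : ℝ) + 1) ^ 2)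
  have hterm : (fun k => tornheimTerm (m + 1, k + 1)) =
      fun k => 1 / ((m : ℝ) + 1) ^ 2 * (f k - f (k + (m + 1))) := by
    funext k
    simp only [tornheimTerm, f, le_add_iff_nonneg_left, zero_le, and_self, if_true]
    push_cast
    field_simp
    ring
  have hrow : ∀ k ∈ Finset.range m,
      zetaTwoOneTerm (m + 1, k + 1) = 1 / ((m : ℝ) + 1) ^ 2 * f k := by
    intro k hk
    rw [Finset.mem_range] at hk
    simp only [zetaTwoOneTerm, f]
    rw [if_pos ⟨by omega, by omega⟩]
    push_cast
    field_simp
  have hsum : ∑ y ∈ Finset.range (m + 1), zetaTwoOneTerm (m + 1, y) + 1 / ((m + 1 : ℕ) : ℝ) ^ 3 -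
      ∑ i ∈ Finset.range 1, tornheimTerm (m + 1, i) =
      1 / ((m : ℝ) + 1) ^ 2 * ∑ k ∈ Finset.range (m + 1), f k := by
    rw [Finset.sum_range_one, Finset.sum_range_succ', Finset.sum_congr rfl hrow,
      Finset.sum_range_succ f, ← Finset.mul_sum]
    have hz : zetaTwoOneTerm (m + 1, 0) = 0 := if_neg (by omega)
    have ht : tornheimTerm (m + 1, 0) = 0 := if_neg (by omega)
    rw [hz, ht, show f m = 1 / ((m : ℝ) + 1) from rfl]
    push_cast
    field_simp
    ring
  rw [← hasSum_nat_add_iff' 1, hterm, hsum]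
  exact htel

lemma summable_zetaTwoOneTerm : Summable zetaTwoOneTerm := by
  have h := Real.summable_nat_rpow_inv.2 (by norm_num : (1 : ℝ) < 3 / 2)
  refine (h.mul_of_nonneg h (fun _ => by positivity) fun _ => by positivity).of_nonneg_of_le
    zetaTwoOneTerm_nonneg fun p => ?_
  simp only [zetaTwoOneTerm]
  split
  · next hp => exact one_div_mul_sq_le_rpow (by exact_mod_cast hp.2) (by exact_mod_cast hp.1.le)
  · positivity

lemma tsum_weightTerm : ∑' p, ENNReal.ofReal (weightTerm p) =
    (∑' m : ℕ, ENNReal.ofReal (1 / (m : ℝ) ^ 3)) * ∑' p, ENNReal.ofReal (coprimeWeightTerm p) := by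
  rw [← tsum_mul_coprime_eq_tsum _ (by simp [weightTerm]), ENNReal.tsum_prod',
    ← ENNReal.tsum_mul_right]
  refine tsum_congr fun d => ?_
  rw [← ENNReal.tsum_mul_left]
  refine tsum_congr fun q => ?_
  split
  · next h => rw [weightTerm_mul h.1 h.2, ENNReal.ofReal_mul (by positivity)]
  · next h =>
    obtain rfl | hd := Nat.eq_zero_or_pos d
    · simp
    · have hq : coprimeWeightTerm q = 0 := if_neg fun hq => h ⟨hd, hq.2.2⟩
      simp [hq]

lemma two_mul_tsum_weightTerm_add :
    2 * ∑' p, ENNReal.ofReal (weightTerm p) + ∑' p, ENNReal.ofReal (invMulAddSqTerm p) =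
      ∑' p, ENNReal.ofReal (zetaTwoOneTerm p) := by
  rw [← ENNReal.tsum_mul_left, ← ENNReal.tsum_add]
  refine tsum_congr fun p => ?_
  rw [← two_mul_weightTerm_add, ENNReal.ofReal_add (by linarith [weightTerm_nonneg p])
    (invMulAddSqTerm_nonneg p), ENNReal.ofReal_mul zero_le_two, ENNReal.ofReal_ofNat]

lemma tsum_tornheimTerm_eq_add_self :
    ∑' p, ENNReal.ofReal (tornheimTerm p) =
      ∑' p, ENNReal.ofReal (zetaTwoOneTerm p) + ∑' p, ENNReal.ofReal (zetaTwoOneTerm p) := by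
  set A : ℕ × ℕ → ℝ≥0∞ := fun p => ENNReal.ofReal (zetaTwoOneTerm p)
  have hA : ∑' q : ℕ × ℕ, A (q.1 + q.2, q.1) = ∑' p, A p :=
    tsum_comp_add_fst_eq_tsum A fun x y h => by simp [A, zetaTwoOneTerm, not_lt.2 h.le]
  calc ∑' p, ENNReal.ofReal (tornheimTerm p)
      = ∑' q : ℕ × ℕ, A (q.1 + q.2, q.1) + ∑' q : ℕ × ℕ, A (q.2 + q.1, q.2) := by
        rw [← ENNReal.tsum_add]
        refine tsum_congr fun q => ?_
        rw [tornheimTerm_eq, add_comm q.2, ENNReal.ofReal_add (zetaTwoOneTerm_nonneg _)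
          (zetaTwoOneTerm_nonneg _)]
    _ = ∑' p, A p + ∑' p, A p := by
        rw [show ∑' q : ℕ × ℕ, A (q.2 + q.1, q.2) = ∑' q : ℕ × ℕ, A (q.1 + q.2, q.1) from
          (Equiv.prodComm ℕ ℕ).tsum_eq fun q => A (q.1 + q.2, q.1), hA]

lemma tsum_tornheimTerm_eq_add_zeta :
    ∑' p, ENNReal.ofReal (tornheimTerm p) =
      ∑' p, ENNReal.ofReal (zetaTwoOneTerm p) + ∑' m : ℕ, ENNReal.ofReal (1 / (m : ℝ) ^ 3) := by
  rw [ENNReal.tsum_prod', ENNReal.tsum_prod', ← ENNReal.tsum_add]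
  refine tsum_congr fun m => ?_
  have hrow : ∑' y, ENNReal.ofReal (zetaTwoOneTerm (m, y)) =
      ∑ y ∈ Finset.range m, ENNReal.ofReal (zetaTwoOneTerm (m, y)) :=
    tsum_eq_sum fun y hy => by simp [zetaTwoOneTerm, Finset.mem_range.not.1 hy]
  rw [tsum_ofReal_eq_of_hasSum (hasSum_tornheimTerm_row m) fun n => tornheimTerm_nonneg _, hrow,
    ENNReal.ofReal_add (Finset.sum_nonneg fun y _ => zetaTwoOneTerm_nonneg _) (by positivity),
    ENNReal.ofReal_sum_of_nonneg fun y _ => zetaTwoOneTerm_nonneg _]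

lemma tsum_zetaTwoOneTerm :
    ∑' p, ENNReal.ofReal (zetaTwoOneTerm p) = ∑' m : ℕ, ENNReal.ofReal (1 / (m : ℝ) ^ 3) := by
  have hfin : ∑' p, ENNReal.ofReal (zetaTwoOneTerm p) ≠ ∞ := by
    rw [← ENNReal.ofReal_tsum_of_nonneg zetaTwoOneTerm_nonneg summable_zetaTwoOneTerm]
    exact ENNReal.ofReal_ne_top
  exact (ENNReal.add_right_inj hfin).1
    (tsum_tornheimTerm_eq_add_self.symm.trans tsum_tornheimTerm_eq_add_zeta)

lemma two_mul_zetaThree_mul_constC_add :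
    2 * zetaThree * constC + ∑' p, invMulAddSqTerm p = zetaThree := by
  set Z := ∑' m : ℕ, ENNReal.ofReal (1 / (m : ℝ) ^ 3) with hZdef
  set C := ∑' p, ENNReal.ofReal (coprimeWeightTerm p)
  set B := ∑' p, ENNReal.ofReal (invMulAddSqTerm p)
  have hkey : 2 * Z * C + B = Z := by
    rw [mul_assoc, ← tsum_weightTerm, two_mul_tsum_weightTerm_add, tsum_zetaTwoOneTerm]
  have hZ : Z ≠ ∞ := by
    rw [hZdef, ← ENNReal.ofReal_tsum_of_nonneg (fun _ => by positivity)
      (Real.summable_one_div_nat_pow.2 (by norm_num))]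
    exact ENNReal.ofReal_ne_top
  have hZC : 2 * Z * C ≠ ∞ := ne_top_of_le_ne_top hZ (le_self_add.trans_eq hkey)
  have hB : B ≠ ∞ := ne_top_of_le_ne_top hZ (le_add_self.trans_eq hkey)
  have hreal := congrArg ENNReal.toReal hkey
  rw [ENNReal.toReal_add hZC hB, ENNReal.toReal_mul, ENNReal.toReal_mul,
    ENNReal.toReal_ofNat] at hreal
  rwa [zetaThree_eq_tsum, show constC = ∑' p, coprimeWeightTerm p from rfl,
    tsum_eq_toReal_tsum_ofReal fun m => by positivity,
    tsum_eq_toReal_tsum_ofReal coprimeWeightTerm_nonneg,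
    tsum_eq_toReal_tsum_ofReal invMulAddSqTerm_nonneg]

end

theorem stmt_3 :
    constC = 1 / 2 - (1 / (2 * zetaThree)) *
      ∑' p : ℕ × ℕ,
        if p.2 < p.1 ∧ 1 ≤ p.2 then
          1 / ((p.2 : ℝ) * ((p.1 : ℝ) + p.2) ^ 2)
        else 0 := by
  have key := two_mul_zetaThree_mul_constC_add
  have hζ := zetaThree_pos
  change constC = 1 / 2 - 1 / (2 * zetaThree) * ∑' p, invMulAddSqTerm p
  field_simp
  linarith
end

section
/- Define G₁(n) = Σ_{d | n} Σ_{x > y ≥ 1, gcd(x,y)=1, Y(n,d,x,y) > 1} (1/x)·( A(n,d,x)·Y(n,d,x,y) + B(x,y)·Y(n,d,x,y)²/2 ). Then for every ε > 0 there is a constant K(ε) > 0 such that | G₁(n) − C·n²·Σ_{d | n} 1/d² | ≤ K(ε)·n^{3/2+ε} for all positive integers n. -/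
/-- `Y(n,d,x,y) = min( n/(d(x+y)) , (n - d²x²)/(dy) )`. -/
noncomputable def Ybound (n d x y : ℕ) : ℝ :=
  min ((n : ℝ) / ((d : ℝ) * ((x : ℝ) + y)))
      (((n : ℝ) - (d : ℝ) ^ 2 * (x : ℝ) ^ 2) / ((d : ℝ) * y))

/-- `A(n,d,x) = n/(dx) + dx`. -/
noncomputable def Aterm (n d x : ℕ) : ℝ := (n : ℝ) / ((d : ℝ) * x) + (d : ℝ) * x

/-- `B(x,y) = -y/x`. -/
noncomputable def Bterm (x y : ℕ) : ℝ := -((y : ℝ) / x)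

/-- `G₁(n)`. -/
noncomputable def Gone (n : ℕ) : ℝ :=
  ∑ d ∈ n.divisors,
    ∑' p : ℕ × ℕ,
      if p.2 < p.1 ∧ 1 ≤ p.2 ∧ Nat.gcd p.1 p.2 = 1 ∧ 1 < Ybound n d p.1 p.2 then
        (1 / (p.1 : ℝ)) *
          (Aterm n d p.1 * Ybound n d p.1 p.2 + Bterm p.1 p.2 * (Ybound n d p.1 p.2) ^ 2 / 2)
      else 0

/-!
Fix a divisor `d` and put `N = n / d`, `m = N / (x + y)`. The bracket of `G₁` is a quadratic in
`Y` whose value at `Y = m` is `N² (2x + y) / (2x² (x + y)²) + d m`, so, as `Y ≤ m`, the `(x, y)`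
term of `G₁` differs from `N²` times the `(x, y)` term of `C` by `d Y` plus corrections that
vanish when `Y = m`. The term `d Y ≤ n / x` only occurs for `(d x)² < n`; the corrections, and
the whole main term when `Y ≤ 1`, only occur for `n ≤ 2 (d x)²`, where they are `O(N² / x³)`.
Summing over the fewer than `x` values of `y` gives an error `O(n √n / d)` for each divisor, and
`∑_{d ∣ n} 1 / d ≤ 1 + log n = O_ε(n^ε)`.
-/

open Finset

noncomputable def mainTerm (x y : ℝ) : ℝ := (2 * x + y) / (2 * x ^ 2 * (x + y) ^ 2)

/- In `smallError`, `largeError` and `errorBound`, the parameters `N` and `D` stand for `n / d`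
and `d`. -/

noncomputable def smallError (N D x : ℝ) : ℝ := if D * x ^ 2 < N then D * N / x else 0

noncomputable def largeError (N D x : ℝ) : ℝ :=
  if N ≤ 2 * D * x ^ 2 then 2 * N ^ 2 / x ^ 3 else 0

noncomputable def errorBound (N D x : ℝ) : ℝ := smallError N D x + largeError N D x

lemma mainTerm_nonneg {x y : ℝ} (hx : 0 ≤ x) (hy : 0 ≤ y) : 0 ≤ mainTerm x y := by
  unfold mainTerm; positivity

lemma mainTerm_le {x y : ℝ} (hx : 0 < x) (hy : 0 ≤ y) : mainTerm x y ≤ 2 / x ^ 3 := by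
  unfold mainTerm
  rw [div_le_div_iff₀ (by positivity) (by positivity)]
  nlinarith [mul_nonneg hx.le hy, mul_nonneg (mul_nonneg hx.le hy) hy, pow_pos hx 3]

lemma smallError_nonneg {N D x : ℝ} (hN : 0 ≤ N) (hD : 0 ≤ D) (hx : 0 ≤ x) :
    0 ≤ smallError N D x := by
  unfold smallError; split_ifs <;> positivity

lemma largeError_nonneg {N D x : ℝ} (hx : 0 ≤ x) : 0 ≤ largeError N D x := by
  unfold largeError; split_ifs <;> positivity

lemma errorBound_nonneg {N D x : ℝ} (hN : 0 ≤ N) (hD : 0 ≤ D) (hx : 0 ≤ x) :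
    0 ≤ errorBound N D x :=
  add_nonneg (smallError_nonneg hN hD hx) (largeError_nonneg hx)

lemma le_two_mul_sq_of_min_le_one {N D x y : ℝ} (hD : 1 ≤ D) (hy : 1 ≤ y) (hyx : y < x)
    (h : min (N / (x + y)) ((N - D * x ^ 2) / y) ≤ 1) : N ≤ 2 * D * x ^ 2 := by
  have hx2 : x ≤ D * x ^ 2 := by nlinarith
  rcases min_le_iff.mp h with h | h
  · rw [div_le_one (by linarith)] at h; linarith
  · rw [div_le_one (by linarith)] at h; linarith

lemma le_two_mul_sq_of_lt {N D x y : ℝ} (hD : 1 ≤ D) (hy : 1 ≤ y) (hyx : y < x)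
    (h : (N - D * x ^ 2) / y < N / (x + y)) : N ≤ 2 * D * x ^ 2 := by
  rw [div_lt_div_iff₀ (by linarith) (by linarith)] at h
  nlinarith [mul_pos (by linarith : (0 : ℝ) < D) (by nlinarith : (0 : ℝ) < x ^ 2)]

lemma bracket_sub_mainTerm {N D x y Y : ℝ} (hx : 0 < x) (hxy : 0 < x + y) :
    1 / x * ((N / x + D * x) * Y + -(y / x) * Y ^ 2 / 2) - N ^ 2 * mainTerm x y
      = D * Y - N / x ^ 2 * (N / (x + y) - Y)
        + y / (2 * x ^ 2) * ((N / (x + y)) ^ 2 - Y ^ 2) := by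
  rw [mainTerm]; field_simp; ring

lemma correction_le {N x y Y m : ℝ} (hx : 0 < x) (hyx : y ≤ x) (hY : 0 ≤ Y)
    (hYm : Y ≤ m) (hmx : m ≤ N / x) :
    N / x ^ 2 * (m - Y) + y / (2 * x ^ 2) * (m ^ 2 - Y ^ 2) ≤ 2 * N ^ 2 / x ^ 3 := by
  have hN : 0 ≤ N / x := by linarith
  have h1 : N / x ^ 2 * (m - Y) ≤ N ^ 2 / x ^ 3 := by
    have hN2 : 0 ≤ N / x ^ 2 := by rw [sq, ← div_div]; exact div_nonneg hN hx.le
    calc N / x ^ 2 * (m - Y) ≤ N / x ^ 2 * (N / x) := by gcongr; linarith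
      _ = N ^ 2 / x ^ 3 := by field_simp
  have h2 : y / (2 * x ^ 2) * (m ^ 2 - Y ^ 2) ≤ N ^ 2 / x ^ 3 := by
    have hsq : 0 ≤ m ^ 2 - Y ^ 2 := by nlinarith
    calc y / (2 * x ^ 2) * (m ^ 2 - Y ^ 2) ≤ x / (2 * x ^ 2) * (N / x) ^ 2 := by
          gcongr
          linarith [pow_le_pow_left₀ (hY.trans hYm) hmx 2, sq_nonneg Y]
      _ = N ^ 2 / x ^ 3 / 2 := by field_simp
      _ ≤ N ^ 2 / x ^ 3 := by linarith [(by positivity : 0 ≤ N ^ 2 / x ^ 3)]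
  linarith [(by ring : 2 * N ^ 2 / x ^ 3 = N ^ 2 / x ^ 3 + N ^ 2 / x ^ 3)]

lemma abs_sub_le_errorBound_of_one_lt {N D x y Y : ℝ} (hD : 1 ≤ D) (hy : 1 ≤ y) (hyx : y < x)
    (hY : Y = min (N / (x + y)) ((N - D * x ^ 2) / y)) (h1 : 1 < Y) :
    |1 / x * ((N / x + D * x) * Y + -(y / x) * Y ^ 2 / 2) - N ^ 2 * mainTerm x y|
      ≤ errorBound N D x := by
  set m := N / (x + y) with hm
  have hx : 0 < x := by linarith
  have hYm : Y ≤ m := hY ▸ min_le_left _ _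
  have hN : 0 < N := (div_pos_iff_of_pos_right (by linarith)).mp (by linarith : 0 < m)
  have hmx : m ≤ N / x := div_le_div_of_nonneg_left hN.le hx (by linarith)
  have hsmall : D * x ^ 2 < N := by
    have : 1 < (N - D * x ^ 2) / y := h1.trans_le (hY ▸ min_le_right _ _)
    rw [one_lt_div (by linarith)] at this
    linarith
  have hA : 0 ≤ N / x ^ 2 * (m - Y) := mul_nonneg (by positivity) (by linarith)
  have hB : 0 ≤ y / (2 * x ^ 2) * (m ^ 2 - Y ^ 2) := mul_nonneg (by positivity) (by nlinarith)
  have hcorr : N / x ^ 2 * (m - Y) + y / (2 * x ^ 2) * (m ^ 2 - Y ^ 2) ≤ largeError N D x := by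
    rcases hYm.eq_or_lt with hYm | hYm
    · simp only [hYm, sub_self, mul_zero, add_zero]
      exact largeError_nonneg hx.le
    have hlarge : N ≤ 2 * D * x ^ 2 := by
      refine le_two_mul_sq_of_lt hD hy hyx ?_
      rcases min_choice m ((N - D * x ^ 2) / y) with h | h <;> rw [← hY] at h
      · linarith
      · rwa [← h]
    rw [largeError, if_pos hlarge]
    exact correction_le hx hyx.le (by linarith) hYm.le hmx
  have hDY : D * Y ≤ D * N / x := by
    rw [mul_div_assoc]; gcongr; exact hYm.trans hmx
  have hDY0 : 0 ≤ D * Y := mul_nonneg (by linarith) (by linarith)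
  rw [bracket_sub_mainTerm hx (by linarith), errorBound, smallError, if_pos hsmall, abs_le]
  constructor <;> linarith

lemma abs_sub_le_errorBound {N D x y Y : ℝ} (hN : 0 ≤ N) (hD : 1 ≤ D) (hy : 1 ≤ y)
    (hyx : y < x)    (hY : Y = min (N / (x + y)) ((N - D * x ^ 2) / y)) :
    |(if 1 < Y then 1 / x * ((N / x + D * x) * Y + -(y / x) * Y ^ 2 / 2) else 0)
        - N ^ 2 * mainTerm x y| ≤ errorBound N D x := by
  split_ifs with h1
  · exact abs_sub_le_errorBound_of_one_lt hD hy hyx hY h1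
  have hlarge := le_two_mul_sq_of_min_le_one hD hy hyx (hY ▸ not_lt.mp h1)
  have hx : 0 < x := by linarith
  have hmain := mainTerm_nonneg hx.le (by linarith : 0 ≤ y)
  rw [zero_sub, abs_neg, abs_of_nonneg (by positivity), errorBound, largeError, if_pos hlarge]
  calc N ^ 2 * mainTerm x y ≤ N ^ 2 * (2 / x ^ 3) := by gcongr; exact mainTerm_le hx (by linarith)
    _ = 2 * N ^ 2 / x ^ 3 := by ring
    _ ≤ _ := le_add_of_nonneg_left (smallError_nonneg hN (by linarith) hx.le)

lemma hasSum_triangle {e : ℕ → ℝ} {a : ℝ} (he : 0 ≤ e)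
    (h : HasSum (fun x : ℕ => (x : ℝ) * e x) a) :
    HasSum (fun p : ℕ × ℕ => if p.2 < p.1 then e p.1 else 0) a := by
  have hfiber : ∀ x, HasSum (fun y => if y < x then e x else 0) (x * e x) := by
    intro x
    have : HasSum (fun y => if y < x then e x else 0)
        (∑ y ∈ range x, if y < x then e x else 0) :=
      hasSum_sum_of_ne_finset_zero fun y hy => if_neg (by simpa using hy)
    rwa [sum_congr rfl fun y hy => if_pos (mem_range.mp hy), sum_const, card_range,
      nsmul_eq_mul] at this
  have hnonneg : 0 ≤ fun p : ℕ × ℕ => if p.2 < p.1 then e p.1 else 0 := fun p => by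
    dsimp only; split_ifs
    exacts [he _, le_rfl]
  have hsummable := (summable_prod_of_nonneg hnonneg).2
    ⟨fun x => (hfiber x).summable, by simpa only [(hfiber _).tsum_eq] using h.summable⟩
  exact h.unique (hsummable.hasSum.prod_fiberwise hfiber) ▸ hsummable.hasSum

lemma sum_range_inv_sq_le {r : ℝ} (hr : 0 < r) (M : ℕ) :
    ∑ x ∈ range M, (if r ≤ x then ((x : ℝ) ^ 2)⁻¹ else 0) ≤ 2 / r := by
  have hceil : 1 ≤ ⌈r⌉₊ := Nat.one_le_iff_ne_zero.mpr (Nat.ceil_pos.mpr hr).ne'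
  rw [← sum_filter]
  calc _ ≤ ∑ x ∈ Ioo (⌈r⌉₊ - 1) M, ((x : ℝ) ^ 2)⁻¹ := by
        refine sum_le_sum_of_subset_of_nonneg (fun x hx => ?_) fun _ _ _ => by positivity
        obtain ⟨hxM, hrx⟩ := mem_filter.mp hx
        have := Nat.ceil_le.mpr hrx
        simp only [mem_Ioo]
        constructor <;> [omega; exact mem_range.mp hxM]
    _ ≤ 2 / ((⌈r⌉₊ - 1 : ℕ) + 1) := sum_Ioo_inv_sq_le _ _
    _ ≤ 2 / r := by
        gcongr
        rw [Nat.cast_sub hceil, Nat.cast_one, sub_add_cancel]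
        exact Nat.le_ceil r

section ErrorSum

-- `s` stands for `√(N / D) = √n / d`.
variable {D s : ℝ}

lemma exists_hasSum_mul_smallError_le (hD : 0 < D) (hs : 0 < s) :
    ∃ a ≤ D ^ 2 * s ^ 3, HasSum (fun x : ℕ => (x : ℝ) * smallError (D * s ^ 2) D x) a := by
  refine ⟨_, ?_, hasSum_sum_of_ne_finset_zero (s := Icc 1 ⌊s⌋₊) fun x hx => ?_⟩
  · calc _ ≤ ∑ x ∈ Icc 1 ⌊s⌋₊, D ^ 2 * s ^ 2 := by
          refine sum_le_sum fun x hx => ?_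
          have hx0 : (x : ℝ) ≠ 0 := by have := (mem_Icc.mp hx).1; positivity
          unfold smallError
          split_ifs
          · exact le_of_eq (by field_simp)
          · rw [mul_zero]; positivity
      _ ≤ s * (D ^ 2 * s ^ 2) := by
          rw [sum_const, Nat.card_Icc, add_tsub_cancel_right, nsmul_eq_mul]
          gcongr
          exact Nat.floor_le hs.le
      _ = D ^ 2 * s ^ 3 := by ring
  · rcases Nat.eq_zero_or_pos x with rfl | hx0
    · simp
    simp only [mem_Icc, not_and, not_le] at hx
    have hsx : s < x := Nat.lt_of_floor_lt (hx hx0)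
    rw [smallError, if_neg (not_lt.mpr (by gcongr)), mul_zero]

lemma mul_largeError_le (hD : 0 < D) (hs : 0 < s) (x : ℕ) :
    x * largeError (D * s ^ 2) D x
      ≤ 2 * (D * s ^ 2) ^ 2 * (if s / 2 ≤ x then ((x : ℝ) ^ 2)⁻¹ else 0) := by
  unfold largeError
  by_cases h : D * s ^ 2 ≤ 2 * D * x ^ 2
  · have hsx : s / 2 ≤ x := by
      have : (s / 2) ^ 2 ≤ (x : ℝ) ^ 2 := by nlinarith
      exact (pow_le_pow_iff_left₀ (by positivity) (by positivity) two_ne_zero).mp this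
    have hx : (x : ℝ) ≠ 0 := ((half_pos hs).trans_le hsx).ne'
    rw [if_pos h, if_pos hsx]
    exact le_of_eq (by field_simp)
  · rw [if_neg h, mul_zero]
    positivity

lemma exists_hasSum_mul_largeError_le (hD : 0 < D) (hs : 0 < s) :
    ∃ a ≤ 8 * D ^ 2 * s ^ 3,
      HasSum (fun x : ℕ => (x : ℝ) * largeError (D * s ^ 2) D x) a := by
  have htail : Summable fun x : ℕ => if s / 2 ≤ x then ((x : ℝ) ^ 2)⁻¹ else 0 :=
    summable_of_sum_range_le (fun x => by positivity) (sum_range_inv_sq_le (half_pos hs))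
  have hsum := Summable.of_nonneg_of_le (fun x => mul_nonneg x.cast_nonneg (largeError_nonneg
    x.cast_nonneg)) (mul_largeError_le hD hs) (htail.mul_left _)
  refine ⟨_, ?_, hsum.hasSum⟩
  calc _ ≤ ∑' x : ℕ,
        2 * (D * s ^ 2) ^ 2 * (if s / 2 ≤ x then ((x : ℝ) ^ 2)⁻¹ else 0) :=
        hsum.tsum_le_tsum (mul_largeError_le hD hs) (htail.mul_left _)
    _ ≤ 2 * (D * s ^ 2) ^ 2 * (2 / (s / 2)) := by
        rw [tsum_mul_left]
        gcongr
        exact Real.tsum_le_of_sum_range_le (fun x => by positivity)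
          (sum_range_inv_sq_le (half_pos hs))
    _ = 8 * D ^ 2 * s ^ 3 := by field_simp; ring

lemma exists_hasSum_mul_errorBound_le (hD : 0 < D) (hs : 0 < s) :
    ∃ a ≤ 9 * D ^ 2 * s ^ 3,
      HasSum (fun x : ℕ => (x : ℝ) * errorBound (D * s ^ 2) D x) a := by
  obtain ⟨a, ha, hsmall⟩ := exists_hasSum_mul_smallError_le hD hs
  obtain ⟨b, hb, hlarge⟩ := exists_hasSum_mul_largeError_le hD hs
  exact ⟨a + b, by linarith, by simpa only [errorBound, mul_add] using hsmall.add hlarge⟩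

end ErrorSum

noncomputable def goneSummand (n d : ℕ) (p : ℕ × ℕ) : ℝ :=
  if p.2 < p.1 ∧ 1 ≤ p.2 ∧ Nat.gcd p.1 p.2 = 1 ∧ 1 < Ybound n d p.1 p.2 then
    (1 / (p.1 : ℝ)) *
      (Aterm n d p.1 * Ybound n d p.1 p.2 + Bterm p.1 p.2 * (Ybound n d p.1 p.2) ^ 2 / 2)
  else 0

noncomputable def constCSummand (p : ℕ × ℕ) : ℝ :=
  if p.2 < p.1 ∧ 1 ≤ p.2 ∧ Nat.gcd p.1 p.2 = 1 then mainTerm p.1 p.2 else 0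

lemma Ybound_eq {n d : ℕ} (x y : ℕ) (hd : 0 < d) :
    Ybound n d x y = min ((n / d : ℝ) / (x + y)) (((n / d : ℝ) - d * x ^ 2) / y) := by
  have : (d : ℝ) ≠ 0 := by positivity
  unfold Ybound
  congr 1
  · rw [div_div]
  · rw [div_sub' this, div_div]; ring_nf

lemma Aterm_eq {n d : ℕ} (x : ℕ) : Aterm n d x = (n / d : ℝ) / x + d * x := by
  rw [Aterm, div_div]

lemma abs_goneSummand_sub_le {n d : ℕ} (hd : 0 < d) (p : ℕ × ℕ) :
    |goneSummand n d p - ((n : ℝ) / d) ^ 2 * constCSummand p|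
      ≤ if p.2 < p.1 then errorBound (n / d) d p.1 else 0 := by
  by_cases hp : p.2 < p.1 ∧ 1 ≤ p.2 ∧ Nat.gcd p.1 p.2 = 1
  · obtain ⟨hyx, hy, hcop⟩ := hp
    have hgone : goneSummand n d p = if 1 < Ybound n d p.1 p.2 then (1 / (p.1 : ℝ)) *
        (Aterm n d p.1 * Ybound n d p.1 p.2 + Bterm p.1 p.2 * (Ybound n d p.1 p.2) ^ 2 / 2)
        else 0 := by
      simp only [goneSummand, hyx, hy, hcop, true_and]
    have hcond : p.2 < p.1 ∧ 1 ≤ p.2 ∧ Nat.gcd p.1 p.2 = 1 := ⟨hyx, hy, hcop⟩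
    rw [hgone, constCSummand, if_pos hcond, if_pos hyx, Aterm_eq, Bterm, Ybound_eq _ _ hd]
    exact abs_sub_le_errorBound (by positivity) (by exact_mod_cast hd) (by exact_mod_cast hy)
      (by exact_mod_cast hyx) rfl
  · have hgone : goneSummand n d p = 0 := if_neg fun h => hp ⟨h.1, h.2.1, h.2.2.1⟩
    rw [hgone, constCSummand, if_neg hp, mul_zero, sub_zero, abs_zero]
    split_ifs
    exacts [errorBound_nonneg (by positivity) (by positivity) (by positivity), le_rfl]

lemma constCSummand_nonneg (p : ℕ × ℕ) : 0 ≤ constCSummand p := by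
  unfold constCSummand; split_ifs
  exacts [mainTerm_nonneg (by positivity) (by positivity), le_rfl]

lemma constCSummand_le (p : ℕ × ℕ) :
    constCSummand p ≤ if p.2 < p.1 then 2 / (p.1 : ℝ) ^ 3 else 0 := by
  unfold constCSummand; split_ifs with h h'
  · exact mainTerm_le (by exact_mod_cast Nat.zero_lt_of_lt h.1) (by positivity)
  · exact absurd h.1 h'
  · positivity
  · exact le_rfl

lemma summable_constCSummand : Summable constCSummand := by
  have hinvSq : Summable fun x : ℕ => (x : ℝ) * (2 / (x : ℝ) ^ 3) := by
    refine ((Real.summable_nat_pow_inv (p := 2)).mpr one_lt_two |>.mul_left 2).congr fun x => ?_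
    rcases x.eq_zero_or_pos with rfl | hx
    · simp
    · field_simp
  exact Summable.of_nonneg_of_le constCSummand_nonneg constCSummand_le
    (hasSum_triangle (fun x => by positivity) hinvSq.hasSum).summable

lemma abs_tsum_goneSummand_sub_le {n d : ℕ} (hn : 0 < n) (hd : 0 < d) :
    |∑' p, goneSummand n d p - ((n : ℝ) / d) ^ 2 * constC| ≤ 9 * n * √n / d := by
  set s := √n / d with hs_def
  have hD : (0 : ℝ) < d := by exact_mod_cast hd
  have hs : 0 < s := by positivity
  have hN : (n : ℝ) / d = d * s ^ 2 := by
    rw [hs_def, div_pow, Real.sq_sqrt (by positivity)]; field_simp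
  obtain ⟨a, ha, hsum⟩ := exists_hasSum_mul_errorBound_le hD hs
  rw [← hN] at hsum
  have hE :=
    hasSum_triangle (fun x => errorBound_nonneg (by positivity) hD.le (by positivity)) hsum
  have hdiff : Summable fun p => goneSummand n d p - ((n : ℝ) / d) ^ 2 * constCSummand p :=
    hE.summable.of_norm_bounded fun p => abs_goneSummand_sub_le hd p
  have hgone : Summable (goneSummand n d) :=
    (hdiff.add (summable_constCSummand.mul_left (((n : ℝ) / d) ^ 2))).congr fun _ =>
      sub_add_cancel _ _
  calc _ = |∑' p, (goneSummand n d p - ((n : ℝ) / d) ^ 2 * constCSummand p)| := by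
        rw [hgone.tsum_sub (summable_constCSummand.mul_left _), tsum_mul_left]; rfl
    _ ≤ ∑' p, |goneSummand n d p - ((n : ℝ) / d) ^ 2 * constCSummand p| :=
        norm_tsum_le_tsum_norm hdiff.norm
    _ ≤ _ := hdiff.abs.tsum_le_tsum (abs_goneSummand_sub_le hd) hE.summable
    _ = a := hE.tsum_eq
    _ ≤ 9 * d ^ 2 * s ^ 3 := ha
    _ = 9 * n * √n / d := by
        rw [hs_def, div_pow, pow_succ (√(n : ℝ)), Real.sq_sqrt (by positivity)]; field_simp

lemma sum_divisors_inv_le (n : ℕ) : ∑ d ∈ n.divisors, (d : ℝ)⁻¹ ≤ 1 + Real.log n :=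
  calc ∑ d ∈ n.divisors, (d : ℝ)⁻¹ ≤ ∑ i ∈ Icc 1 n, (i : ℝ)⁻¹ :=
        sum_le_sum_of_subset_of_nonneg
          (fun d hd => mem_Icc.mpr ⟨Nat.pos_of_mem_divisors hd, Nat.divisor_le hd⟩)
          fun _ _ _ => by positivity
    _ = harmonic n := by simp [harmonic_eq_sum_Icc]
    _ ≤ 1 + Real.log n := harmonic_le_one_add_log n

lemma one_add_log_le_mul_rpow {x ε : ℝ} (hx : 1 ≤ x) (hε : 0 < ε) :
    1 + Real.log x ≤ (1 + ε⁻¹) * x ^ ε := by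
  have h1 : 1 ≤ x ^ ε := Real.one_le_rpow hx hε.le
  have h2 : Real.log x ≤ x ^ ε / ε := Real.log_le_rpow_div (by linarith) hε
  rw [div_eq_inv_mul] at h2
  nlinarith [inv_pos.mpr hε]

theorem stmt_4 :
    ∀ ε : ℝ, 0 < ε → ∃ K : ℝ, 0 < K ∧ ∀ n : ℕ, 0 < n →
      |Gone n - constC * (n : ℝ) ^ 2 * ∑ d ∈ n.divisors, 1 / (d : ℝ) ^ 2|
        ≤ K * (n : ℝ) ^ ((3 : ℝ) / 2 + ε) := by
  intro ε hε
  refine ⟨9 * (1 + ε⁻¹), by positivity, fun n hn => ?_⟩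
  have hn1 : (1 : ℝ) ≤ n := by exact_mod_cast hn
  have hsplit : Gone n - constC * (n : ℝ) ^ 2 * ∑ d ∈ n.divisors, 1 / (d : ℝ) ^ 2
      = ∑ d ∈ n.divisors, (∑' p, goneSummand n d p - ((n : ℝ) / d) ^ 2 * constC) := by
    rw [show Gone n = ∑ d ∈ n.divisors, ∑' p, goneSummand n d p from rfl, mul_sum,
      ← sum_sub_distrib]
    refine sum_congr rfl fun d _ => ?_
    ring
  calc _ ≤ ∑ d ∈ n.divisors, 9 * n * √n / d := by
        rw [hsplit]
        exact (abs_sum_le_sum_abs _ _).trans <| sum_le_sum fun d hd =>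
          abs_tsum_goneSummand_sub_le hn (Nat.pos_of_mem_divisors hd)
    _ = 9 * n * √n * ∑ d ∈ n.divisors, (d : ℝ)⁻¹ := by
        simp only [mul_sum, div_eq_mul_inv]
    _ ≤ 9 * n * √n * ((1 + ε⁻¹) * (n : ℝ) ^ ε) := by
        gcongr
        exact (sum_divisors_inv_le n).trans (one_add_log_le_mul_rpow hn1 hε)
    _ = 9 * (1 + ε⁻¹) * (n : ℝ) ^ ((3 : ℝ) / 2 + ε) := by
        rw [Real.rpow_add (by positivity), show (3 : ℝ) / 2 = 1 + 1 / 2 by norm_num,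
          Real.rpow_add (by positivity), Real.rpow_one, ← Real.sqrt_eq_rpow]
        ring
end

section
/- Let φ be a real number with 0 < |φ| ≤ π. Then for every integer l ≥ 1, | Σ_{j=1}^{l−1} j·exp(i·φ·j) | ≤ π²/(2·φ²) + (l−1)·π/(2·|φ|). -/
/-! Multiplying `S = ∑_{j=1}^{m} j z^j` by `(1 - z)²` telescopes it to
`z (1 - z^m) - m z^(m+1) (1 - z)`, so for `‖z‖ ≤ 1` we get `‖S‖ ≤ 2/‖1 - z‖² + m/‖1 - z‖`.
For `z = exp(iφ)` the chord is `‖1 - z‖ = 2 |sin (φ/2)| ≥ 2|φ|/π` by Jordan's inequality. -/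

open Finset Real

theorem one_sub_sq_mul_sum_Ico_natCast_mul_pow {R : Type*} [CommRing R] (z : R) (m : ℕ) :
    (1 - z) ^ 2 * ∑ j ∈ Ico 1 (m + 1), (j : R) * z ^ j
      = z * (1 - z ^ m) - m * z ^ (m + 1) * (1 - z) := by
  induction m with
  | zero => simp
  | succ n ih =>
    rw [sum_Ico_succ_top (by omega), mul_add, ih]
    push_cast
    ring

theorem norm_sum_Ico_natCast_mul_pow_le {𝕜 : Type*} [NormedField 𝕜] {z : 𝕜} (hz : ‖z‖ ≤ 1)
    (hz1 : z ≠ 1) (m : ℕ) :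
    ‖∑ j ∈ Ico 1 (m + 1), (j : 𝕜) * z ^ j‖ ≤ 2 / ‖1 - z‖ ^ 2 + m / ‖1 - z‖ := by
  have hpos : 0 < ‖1 - z‖ := norm_pos_iff.2 (sub_ne_zero.2 hz1.symm)
  have hpow (k : ℕ) : ‖z ^ k‖ ≤ 1 := by
    rw [norm_pow]
    exact pow_le_one₀ (norm_nonneg z) hz
  have hnum : ‖z * (1 - z ^ m) - m * z ^ (m + 1) * (1 - z)‖ ≤ 2 + m * ‖1 - z‖ :=
    calc _ ≤ ‖z‖ * ‖1 - z ^ m‖ + ‖(m : 𝕜)‖ * ‖z ^ (m + 1)‖ * ‖1 - z‖ := by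
          simpa only [norm_mul] using norm_sub_le (z * (1 - z ^ m)) (m * z ^ (m + 1) * (1 - z))
      _ ≤ 1 * (‖(1 : 𝕜)‖ + 1) + m * 1 * ‖1 - z‖ := by
          gcongr
          · exact (norm_sub_le (1 : 𝕜) (z ^ m)).trans (by gcongr; exact hpow m)
          · simpa using Nat.norm_cast_le (α := 𝕜) m
          · exact hpow _
      _ = 2 + m * ‖1 - z‖ := by norm_num
  calc ‖∑ j ∈ Ico 1 (m + 1), (j : 𝕜) * z ^ j‖
      = ‖z * (1 - z ^ m) - m * z ^ (m + 1) * (1 - z)‖ / ‖1 - z‖ ^ 2 := by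
        rw [← one_sub_sq_mul_sum_Ico_natCast_mul_pow, norm_mul, norm_pow,
          mul_div_cancel_left₀ _ (by positivity)]
    _ ≤ (2 + m * ‖1 - z‖) / ‖1 - z‖ ^ 2 := by gcongr
    _ = 2 / ‖1 - z‖ ^ 2 + m / ‖1 - z‖ := by field_simp

theorem two_mul_abs_div_pi_le_norm_exp_I_mul_sub_one {x : ℝ} (hx : |x| ≤ π) :
    2 * |x| / π ≤ ‖Complex.exp (Complex.I * x) - 1‖ := by
  rw [Complex.norm_exp_I_mul_ofReal_sub_one, norm_mul, Real.norm_eq_abs, Real.norm_eq_abs,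
    abs_two]
  have hjordan := mul_le_sin (abs_nonneg (x / 2)) (by rw [abs_div, abs_two]; linarith)
  have hsin : sin |x / 2| ≤ |sin (x / 2)| := by
    rcases abs_cases (x / 2) with ⟨h, -⟩ | ⟨h, -⟩
    · rw [h]
      exact le_abs_self _
    · rw [h, sin_neg]
      exact neg_le_abs _
  calc 2 * |x| / π = 2 * (2 / π * |x / 2|) := by rw [abs_div, abs_two]; ring
    _ ≤ 2 * |sin (x / 2)| := by gcongr; linarith

theorem stmt_8 (φ : ℝ) (hφ : 0 < |φ|) (hφπ : |φ| ≤ Real.pi) :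
    ∀ l : ℕ, 1 ≤ l →
      ‖∑ j ∈ Finset.Ico 1 l, (j : ℂ) * Complex.exp (Complex.I * φ * j)‖
        ≤ Real.pi ^ 2 / (2 * φ ^ 2) + ((l : ℝ) - 1) * Real.pi / (2 * |φ|) := by
  intro l hl
  obtain ⟨m, rfl⟩ := Nat.exists_eq_add_of_le' hl
  set z := Complex.exp (Complex.I * φ)
  have hpow (j : ℕ) : Complex.exp (Complex.I * φ * j) = z ^ j := by
    rw [← Complex.exp_nat_mul]
    ring_nf
  have hchord : 2 * |φ| / π ≤ ‖1 - z‖ := by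
    rw [norm_sub_rev]
    exact two_mul_abs_div_pi_le_norm_exp_I_mul_sub_one hφπ
  have hz1 : z ≠ 1 := by
    rintro hz
    rw [hz, sub_self, norm_zero] at hchord
    have : 0 < 2 * |φ| / π := by positivity
    linarith
  have hz : ‖z‖ ≤ 1 := (Complex.norm_exp_I_mul_ofReal φ).le
  simp_rw [hpow]
  calc _ ≤ 2 / ‖1 - z‖ ^ 2 + m / ‖1 - z‖ := norm_sum_Ico_natCast_mul_pow_le hz hz1 m
    _ ≤ 2 / (2 * |φ| / π) ^ 2 + m / (2 * |φ| / π) := by gcongr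
    _ = _ := by
      rw [← sq_abs φ]
      push_cast
      field_simp
      ring
end

section
/- For every integer n ≥ 2, the exact identity Σ_{1 ≤ k ≤ n/2} S(n,k) = Σ_{(x, x', y, y')} x' + Σ_{1 ≤ k ≤ n/2} gcd(n,k) holds, where the middle sum runs over all quadruples of positive integers (x, x', y, y') with x > y ≥ 1, x' > y' ≥ 1, gcd(x,y) = 1, and n = x·x' + y·y'. -/
/-!
Run the Euclidean algorithm on `(n, k)` as a walk on quadruples `(x, x', y, y')` with
`n = x * x' + y * y'`: start at `(1, n, 0, k)` and step
`(x, x', y, y') ↦ (x * q + y, y', x, x' % y')` with `q = x' / y'`. After `j` steps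
`x' = r_j`, `y' = r_{j+1}`, so summing `x'` over the states with `y' ≠ 0` gives
`S(n, k) - gcd(n, k)`. For `2 * k ≤ n` these states are exactly admissible quadruples
(`y < x` because the first quotient is at least 2), and the step can be undone by running
Euclid on `(x, y)`, which leads every admissible quadruple back to a unique start `(1, n, 0, k)`.
-/

/-- Sum of remainders in the Euclidean algorithm applied to `(n, k)`. -/
def euclidRemainderSum : ℕ → ℕ → ℕ
  | _, 0 => 0
  | n, (k+1) => (k+1) + euclidRemainderSum (k+1) (n % (k+1))
  termination_by n k => k
  decreasing_by exact Nat.mod_lt _ (Nat.succ_pos k)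

namespace EuclidQuad

def value : ℕ × ℕ × ℕ × ℕ → ℕ
  | (x, x', y, y') => x * x' + y * y'

def IsAdmissible : ℕ × ℕ × ℕ × ℕ → Prop
  | (x, x', y, y') => y < x ∧ 1 ≤ y ∧ y' < x' ∧ 1 ≤ y' ∧ Nat.gcd x y = 1

def step : ℕ × ℕ × ℕ × ℕ → ℕ × ℕ × ℕ × ℕ
  | (x, x', y, y') => (x * (x' / y') + y, y', x, x' % y')

def stepBack : ℕ × ℕ × ℕ × ℕ → ℕ × ℕ × ℕ × ℕ
  | (x, x', y, y') => (y, x / y * x' + y', x % y, x')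

def chain : ℕ × ℕ × ℕ × ℕ → List (ℕ × ℕ × ℕ × ℕ)
  | (x, x', y, y') =>
    if y' = 0 ∨ x' % y' = 0 then [] else step (x, x', y, y') :: chain (step (x, x', y, y'))
  termination_by s => s.2.2.2
  decreasing_by exact Nat.mod_lt _ (by omega)

def root : ℕ × ℕ × ℕ × ℕ → ℕ × ℕ × ℕ × ℕ
  | (x, x', y, y') => if y = 0 then (x, x', y, y') else root (stepBack (x, x', y, y'))
  termination_by s => s.2.2.1
  decreasing_by exact Nat.mod_lt _ (by omega)

theorem value_step (s : ℕ × ℕ × ℕ × ℕ) : value (step s) = value s := by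
  obtain ⟨x, x', y, y'⟩ := s
  simp only [step, value]
  nth_rw 3 [← Nat.div_add_mod x' y']
  ring

theorem value_stepBack (s : ℕ × ℕ × ℕ × ℕ) : value (stepBack s) = value s := by
  obtain ⟨x, x', y, y'⟩ := s
  simp only [stepBack, value]
  nth_rw 3 [← Nat.div_add_mod x y]
  ring

theorem stepBack_step {x x' y y' : ℕ} (h : y < x) :
    stepBack (step (x, x', y, y')) = (x, x', y, y') := by
  have hx : 0 < x := by omega
  simp only [step, stepBack]
  have hdiv : (x * (x' / y') + y) / x = x' / y' := by
    rw [Nat.mul_add_div hx, Nat.div_eq_of_lt h, add_zero]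
  have hmod : (x * (x' / y') + y) % x = y := by
    rw [Nat.mul_add_mod, Nat.mod_eq_of_lt h]
  rw [hdiv, hmod, mul_comm, Nat.div_add_mod]

theorem step_stepBack {x x' y y' : ℕ} (h : y' < x') :
    step (stepBack (x, x', y, y')) = (x, x', y, y') := by
  have hx' : 0 < x' := by omega
  simp only [step, stepBack]
  have hdiv : (x / y * x' + y') / x' = x / y := by
    rw [mul_comm, Nat.mul_add_div hx', Nat.div_eq_of_lt h, add_zero]
  have hmod : (x / y * x' + y') % x' = y' := by
    rw [mul_comm, Nat.mul_add_mod, Nat.mod_eq_of_lt h]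
  rw [hdiv, hmod, Nat.div_add_mod]

theorem isAdmissible_step {x x' y y' : ℕ} (hs : IsAdmissible (x, x', y, y')) (hr : x' % y' ≠ 0) :
    IsAdmissible (step (x, x', y, y')) := by
  obtain ⟨hyx, hy, hyx', hy', hg⟩ := hs
  have hq : 1 ≤ x' / y' := (Nat.one_le_div_iff (by omega)).2 hyx'.le
  refine ⟨by nlinarith, by omega, Nat.mod_lt _ (by omega), by omega, ?_⟩
  rw [add_comm, Nat.gcd_add_mul_left_left, Nat.gcd_comm, hg]

theorem isAdmissible_stepBack {x x' y y' : ℕ} (hs : IsAdmissible (x, x', y, y')) (hr : x % y ≠ 0) :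
    IsAdmissible (stepBack (x, x', y, y')) := by
  obtain ⟨hyx, hy, hyx', hy', hg⟩ := hs
  have hq : 1 ≤ x / y := (Nat.one_le_div_iff (by omega)).2 hyx.le
  refine ⟨Nat.mod_lt _ (by omega), by omega, by nlinarith, by omega, ?_⟩
  rw [Nat.gcd_comm, ← Nat.gcd_rec, Nat.gcd_comm, hg]

theorem isAdmissible_step_start {n k : ℕ} (hk : 1 ≤ k) (h2k : 2 * k ≤ n) (hr : n % k ≠ 0) :
    IsAdmissible (step (1, n, 0, k)) := by
  have hq : 2 ≤ n / k := (Nat.le_div_iff_mul_le hk).2 (by linarith)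
  simp only [IsAdmissible, step]
  refine ⟨by omega, le_rfl, Nat.mod_lt _ hk, by omega, Nat.gcd_one_right _⟩

theorem root_step {x x' y y' : ℕ} (h : y < x) :
    root (step (x, x', y, y')) = root (x, x', y, y') := by
  conv_rhs => rw [← stepBack_step (x' := x') (y' := y') h]
  simp only [step]
  rw [root, if_neg (by omega)]

theorem chain_eq_cons {x x' y y' : ℕ} (hy' : y' ≠ 0) (hr : x' % y' ≠ 0) :
    chain (x, x', y, y') = step (x, x', y, y') :: chain (step (x, x', y, y')) := by
  rw [chain, if_neg (by omega)]

theorem euclidRemainderSum_of_ne_zero (n : ℕ) {k : ℕ} (hk : k ≠ 0) :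
    euclidRemainderSum n k = k + euclidRemainderSum k (n % k) := by
  obtain ⟨k, rfl⟩ := Nat.exists_eq_succ_of_ne_zero hk
  rw [euclidRemainderSum]

theorem sum_chain_add_gcd (s : ℕ × ℕ × ℕ × ℕ) (hs : s.2.2.2 ≠ 0) :
    ((chain s).map (·.2.1)).sum + Nat.gcd s.2.1 s.2.2.2 = euclidRemainderSum s.2.1 s.2.2.2 := by
  fun_induction chain s with
  | case1 x x' y y' h =>
    simp only at hs ⊢
    have hr : x' % y' = 0 := h.resolve_left hs
    rw [euclidRemainderSum_of_ne_zero _ hs, hr, euclidRemainderSum,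
      Nat.gcd_eq_right (Nat.dvd_of_mod_eq_zero hr)]
    simp
  | case2 x x' y y' hne ih =>
    have hr : x' % y' ≠ 0 := fun h => hne (Or.inr h)
    have hgcd : Nat.gcd x' y' = Nat.gcd y' (x' % y') := by
      rw [Nat.gcd_comm, Nat.gcd_rec, Nat.gcd_comm]
    have ih := ih hr
    dsimp only [step] at hs ih ⊢
    rw [List.map_cons, List.sum_cons, euclidRemainderSum_of_ne_zero _ hs, ← ih, hgcd]
    ring

theorem le_of_mem_chain {s q : ℕ × ℕ × ℕ × ℕ} (hq : q ∈ chain s) : q.2.1 ≤ s.2.2.2 := by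
  fun_induction chain s with
  | case1 => simp at hq
  | case2 x x' y y' hne ih =>
    rcases List.mem_cons.1 hq with rfl | hq
    · exact le_rfl
    · exact (ih hq).trans (Nat.mod_lt _ (by omega)).le

theorem nodup_chain (s : ℕ × ℕ × ℕ × ℕ) : (chain s).Nodup := by
  fun_induction chain s with
  | case1 => exact List.nodup_nil
  | case2 x x' y y' hne ih =>
    exact List.nodup_cons.2
      ⟨fun h => absurd (le_of_mem_chain h) (Nat.not_le.2 (Nat.mod_lt x' (by omega))), ih⟩

theorem value_of_mem_chain {s q : ℕ × ℕ × ℕ × ℕ} (hq : q ∈ chain s) : value q = value s := by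
  fun_induction chain s with
  | case1 => simp at hq
  | case2 x x' y y' hne ih =>
    rcases List.mem_cons.1 hq with rfl | hq
    · exact value_step _
    · exact (ih hq).trans (value_step _)

theorem IsAdmissible.of_mem_chain {s q : ℕ × ℕ × ℕ × ℕ} (hs : IsAdmissible s) (hq : q ∈ chain s) :
    IsAdmissible q ∧ root q = root s := by
  fun_induction chain s with
  | case1 => simp at hq
  | case2 x x' y y' hne ih =>
    have hs' := isAdmissible_step hs (fun h => hne (Or.inr h))
    have hroot : root (step (x, x', y, y')) = root (x, x', y, y') := root_step hs.1
    rcases List.mem_cons.1 hq with rfl | hq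
    · exact ⟨hs', hroot⟩
    · obtain ⟨hq, hq'⟩ := ih hs' hq
      exact ⟨hq, hq'.trans hroot⟩

theorem step_mem_chain_self {t : ℕ × ℕ × ℕ × ℕ} (ht : t.2.2.2 ≠ 0) (hr : (step t).2.2.2 ≠ 0) :
    step t ∈ chain t := by
  obtain ⟨x, x', y, y'⟩ := t
  rw [chain_eq_cons ht hr]
  exact List.mem_cons_self

theorem step_mem_chain {s t : ℕ × ℕ × ℕ × ℕ} (ht : t ∈ chain s) (hr : (step t).2.2.2 ≠ 0) :
    step t ∈ chain s := by
  fun_induction chain s with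
  | case1 => simp at ht
  | case2 a a' b b' hne ih =>
    rcases List.mem_cons.1 ht with rfl | ht
    · exact List.mem_cons_of_mem _ (step_mem_chain_self (fun h => hne (Or.inr h)) hr)
    · exact List.mem_cons_of_mem _ (ih ht)

theorem IsAdmissible.exists_root {q : ℕ × ℕ × ℕ × ℕ} (hq : IsAdmissible q) :
    ∃ k, 1 ≤ k ∧ 2 * k ≤ value q ∧ root q = (1, value q, 0, k) ∧ q ∈ chain (1, value q, 0, k) := by
  fun_induction root q with
  | case1 x x' y' => exact absurd hq.2.1 (by simp)
  | case2 x x' y y' hy ih =>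
    have hstep : step (stepBack (x, x', y, y')) = (x, x', y, y') := step_stepBack hq.2.2.1
    by_cases hr : x % y = 0
    · obtain ⟨hyx, -, hyx', hy', hg⟩ := hq
      have hy1 : y = 1 := by rw [← hg, Nat.gcd_eq_right (Nat.dvd_of_mod_eq_zero hr)]
      subst hy1
      have ht : stepBack (x, x', 1, y') = (1, value (x, x', 1, y'), 0, x') := by
        simp [stepBack, value, Nat.mod_one]
      rw [ht] at hstep ⊢
      refine ⟨x', by omega, ?_, by rw [root, if_pos rfl], ?_⟩
      · simp only [value]
        nlinarith
      · have := step_mem_chain_self (t := (1, value (x, x', 1, y'), 0, x')) (by dsimp only; omega)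
          (by rw [hstep]; dsimp only; omega)
        rwa [hstep] at this
    · obtain ⟨k, hk, h2k, hroot, hmem⟩ := ih (isAdmissible_stepBack hq hr)
      rw [value_stepBack] at h2k hroot hmem
      have := step_mem_chain hmem (by rw [hstep]; exact Nat.one_le_iff_ne_zero.1 hq.2.2.2.1)
      rw [hstep] at this
      exact ⟨k, hk, h2k, hroot, this⟩

theorem mem_chain_start_iff {n k : ℕ} {q : ℕ × ℕ × ℕ × ℕ} (hk : 1 ≤ k) (h2k : 2 * k ≤ n) :
    q ∈ chain (1, n, 0, k) ↔ IsAdmissible q ∧ value q = n ∧ (root q).2.2.2 = k := by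
  constructor
  · intro hq
    have hr : n % k ≠ 0 := by
      intro hr
      rw [chain, if_pos (Or.inr hr)] at hq
      simp at hq
    rw [chain_eq_cons (by omega) hr] at hq
    have hstart := isAdmissible_step_start hk h2k hr
    have hroot : root (step (1, n, 0, k)) = (1, n, 0, k) := by
      rw [root_step one_pos, root, if_pos rfl]
    have hval : value (step (1, n, 0, k)) = n := by rw [value_step]; simp [value]
    rcases List.mem_cons.1 hq with rfl | hq
    · exact ⟨hstart, hval, by rw [hroot]⟩
    · obtain ⟨hadm, hroot'⟩ := hstart.of_mem_chain hq
      exact ⟨hadm, (value_of_mem_chain hq).trans hval, by rw [hroot', hroot]⟩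
  · rintro ⟨hq, rfl, rfl⟩
    obtain ⟨k, -, -, hroot, hmem⟩ := hq.exists_root
    rw [hroot]
    exact hmem

theorem sum_euclidRemainderSum_eq_sum_add_sum_gcd {n : ℕ} (T : Finset (ℕ × ℕ × ℕ × ℕ))
    (hT : ∀ q, q ∈ T ↔ IsAdmissible q ∧ value q = n) :
    ∑ k ∈ Finset.Icc 1 (n / 2), euclidRemainderSum n k =
      ∑ q ∈ T, q.2.1 + ∑ k ∈ Finset.Icc 1 (n / 2), Nat.gcd n k := by
  have hmaps : ∀ q ∈ T, (root q).2.2.2 ∈ Finset.Icc 1 (n / 2) := by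
    intro q hq
    obtain ⟨hadm, rfl⟩ := (hT q).1 hq
    obtain ⟨k, hk, h2k, hroot, -⟩ := hadm.exists_root
    simp only [hroot, Finset.mem_Icc]
    omega
  rw [← Finset.sum_fiberwise_of_maps_to hmaps, ← Finset.sum_add_distrib]
  refine Finset.sum_congr rfl fun k hk => ?_
  rw [Finset.mem_Icc] at hk
  have hfiber : {q ∈ T | (root q).2.2.2 = k} = (chain (1, n, 0, k)).toFinset := by
    ext q
    rw [Finset.mem_filter, List.mem_toFinset, mem_chain_start_iff hk.1 (by omega), hT, and_assoc]
  rw [hfiber, List.sum_toFinset _ (nodup_chain _)]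
  exact (sum_chain_add_gcd (1, n, 0, k) (by dsimp only; omega)).symm

end EuclidQuad

theorem stmt_17_general (n : ℕ) :
    ∑ k ∈ Finset.Icc 1 (n / 2), euclidRemainderSum n k =
      (∑ q ∈ (Finset.range (n + 1) ×ˢ Finset.range (n + 1) ×ˢ
                Finset.range (n + 1) ×ˢ Finset.range (n + 1)).filter
          (fun q : ℕ × ℕ × ℕ × ℕ =>
            q.2.2.1 < q.1 ∧ 1 ≤ q.2.2.1 ∧ q.2.2.2 < q.2.1 ∧ 1 ≤ q.2.2.2 ∧
              Nat.gcd q.1 q.2.2.1 = 1 ∧ n = q.1 * q.2.1 + q.2.2.1 * q.2.2.2),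
          q.2.1)
        + ∑ k ∈ Finset.Icc 1 (n / 2), Nat.gcd n k := by
  refine EuclidQuad.sum_euclidRemainderSum_eq_sum_add_sum_gcd _ fun ⟨x, x', y, y'⟩ => ?_
  simp only [Finset.mem_filter, Finset.mem_product, Finset.mem_range,
    EuclidQuad.IsAdmissible, EuclidQuad.value]
  constructor
  · rintro ⟨-, hyx, hy, hyx', hy', hg, rfl⟩
    exact ⟨⟨hyx, hy, hyx', hy', hg⟩, rfl⟩
  · rintro ⟨⟨hyx, hy, hyx', hy', hg⟩, rfl⟩
    have : x ≤ x * x' := Nat.le_mul_of_pos_right x (by omega)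
    have : x' ≤ x * x' := Nat.le_mul_of_pos_left x' (by omega)
    have : y ≤ y * y' := Nat.le_mul_of_pos_right y (by omega)
    have : y' ≤ y * y' := Nat.le_mul_of_pos_left y' (by omega)
    exact ⟨⟨by omega, by omega, by omega, by omega⟩, hyx, hy, hyx', hy', hg, rfl⟩

/-- In a quadruple `q = (x, x', y, y')`, the components are
`x = q.1`, `x' = q.2.1`, `y = q.2.2.1`, `y' = q.2.2.2`. -/
theorem stmt_17 (n : ℕ) (hn : 2 ≤ n) :
    ∑ k ∈ Finset.Icc 1 (n / 2), euclidRemainderSum n k =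
      (∑ q ∈ (Finset.range (n + 1) ×ˢ Finset.range (n + 1) ×ˢ
                Finset.range (n + 1) ×ˢ Finset.range (n + 1)).filter
          (fun q : ℕ × ℕ × ℕ × ℕ =>
            q.2.2.1 < q.1 ∧ 1 ≤ q.2.2.1 ∧ q.2.2.2 < q.2.1 ∧ 1 ≤ q.2.2.2 ∧
              Nat.gcd q.1 q.2.2.1 = 1 ∧ n = q.1 * q.2.1 + q.2.2.1 * q.2.2.2),
          q.2.1)
        + ∑ k ∈ Finset.Icc 1 (n / 2), Nat.gcd n k :=
  stmt_17_general n
end
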